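/- arXiv:math/0608424 — 3 statements merged into one kernel-verified Lean document; each statement's English description precedes it below -/
import Mathlib

section
/- Let X = Y be a real Hilbert space with duality product given by the inner product. Then the Cauchy bipotential b(x,y) = ‖x‖·‖y‖ is a bipotential: it is convex and continuous in each variable, satisfies b(x,y) ≥ ⟨x,y⟩ for all x, y, and b(x,y) = ⟨x,y⟩ holds if and only if x = 0, or y = 0, or there exists λ > 0 with y = λx; moreover these equality conditions are equivalent to y ∈ ∂b(·,y)(x) and to x ∈ ∂b(x,·)(y). -/
open scoped InnerProductSpace

noncomputable section

variable {X Y : Type*} [AddCommGroup X] [Module ℝ X] [TopologicalSpace X]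
  [AddCommGroup Y] [Module ℝ Y] [TopologicalSpace Y]

/-- Convexity for `ℝ ∪ {+∞}`-valued (here `EReal`-valued) functions. -/
def EConvexOn {V : Type*} [AddCommGroup V] [Module ℝ V] (φ : V → EReal) : Prop :=
  ∀ u v : V, ∀ a b : ℝ, 0 ≤ a → 0 ≤ b → a + b = 1 →
    φ (a • u + b • v) ≤ (a : EReal) * φ u + (b : EReal) * φ v

/-- Fenchel conjugate `φ*(y) = sup_x (⟨x,y⟩ - φ(x))` with respect to a duality pairing `p`. -/
def Conj (p : X →ₗ[ℝ] Y →ₗ[ℝ] ℝ) (φ : X → EReal) (y : Y) : EReal :=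
  ⨆ x : X, ((p x y : ℝ) : EReal) - φ x

/-- Subdifferential of `φ : X → ℝ ∪ {+∞}` at `x`: the set of `u ∈ Y` with
`⟨z - x, u⟩ + φ(x) ≤ φ(z)` for all `z`. -/
def SubdiffX (p : X →ₗ[ℝ] Y →ₗ[ℝ] ℝ) (φ : X → EReal) (x : X) : Set Y :=
  {u : Y | ∀ z : X, ((p (z - x) u : ℝ) : EReal) + φ x ≤ φ z}

/-- Subdifferential of `ψ : Y → ℝ ∪ {+∞}` at `y`. -/
def SubdiffY (p : X →ₗ[ℝ] Y →ₗ[ℝ] ℝ) (ψ : Y → EReal) (y : Y) : Set X :=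
  {v : X | ∀ w : Y, ((p v (w - y) : ℝ) : EReal) + ψ y ≤ ψ w}

/-- Definition of a bipotential. -/
def IsBipotential (p : X →ₗ[ℝ] Y →ₗ[ℝ] ℝ) (b : X → Y → EReal) : Prop :=
  (∀ y, EConvexOn (fun x => b x y) ∧ LowerSemicontinuous (fun x => b x y)) ∧
  (∀ x, EConvexOn (fun y => b x y) ∧ LowerSemicontinuous (fun y => b x y)) ∧
  (∀ x y, ((p x y : ℝ) : EReal) ≤ b x y) ∧
  (∀ x y,
    (y ∈ SubdiffX p (fun x' => b x' y) x ↔ x ∈ SubdiffY p (fun y' => b x y') y) ∧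
    (x ∈ SubdiffY p (fun y' => b x y') y ↔ b x y = ((p x y : ℝ) : EReal)))

/-- Graph of a bipotential. -/
def MGraph (p : X →ₗ[ℝ] Y →ₗ[ℝ] ℝ) (b : X → Y → EReal) : Set (X × Y) :=
  {q : X × Y | b q.1 q.2 = ((p q.1 q.2 : ℝ) : EReal)}

/-- Graph `M(φ)` of the law associated to a potential `φ`. -/
def Mphi (p : X →ₗ[ℝ] Y →ₗ[ℝ] ℝ) (φ : X → EReal) : Set (X × Y) :=
  {q : X × Y | φ q.1 + Conj p φ q.2 = ((p q.1 q.2 : ℝ) : EReal)}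

/-- BB-graph: nonempty set whose slices are all convex and closed. -/
def IsBBGraph (M : Set (X × Y)) : Prop :=
  M.Nonempty ∧
  (∀ x : X, Convex ℝ {y : Y | (x, y) ∈ M} ∧ IsClosed {y : Y | (x, y) ∈ M}) ∧
  (∀ y : Y, Convex ℝ {x : X | (x, y) ∈ M} ∧ IsClosed {x : X | (x, y) ∈ M})

/-- Convex lagrangian cover of `M` indexed by a nonempty compact space `Λ`. -/
def IsCover (p : X →ₗ[ℝ] Y →ₗ[ℝ] ℝ) {Λ : Type*} [TopologicalSpace Λ]
    (M : Set (X × Y)) (φ : Λ → X → EReal) : Prop :=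
  CompactSpace Λ ∧ Nonempty Λ ∧
  (∀ l : Λ, EConvexOn (φ l) ∧ LowerSemicontinuous (φ l)) ∧
  (∀ x : X, LowerSemicontinuous (fun q : Λ × Y => φ q.1 x + Conj p (φ q.1) q.2)) ∧
  (∀ y : Y, LowerSemicontinuous (fun q : Λ × X => φ q.1 q.2 + Conj p (φ q.1) y)) ∧
  M = ⋃ l : Λ, Mphi p (φ l)

/-- Implicit convexity of a parametrized family. -/
def ImplicitlyConvex {Λ : Type*} {V : Type*} [AddCommGroup V] [Module ℝ V]
    (g : Λ → V → EReal) : Prop :=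
  ∀ (l₁ : Λ) (z₁ : V) (l₂ : Λ) (z₂ : V) (a b : ℝ), 0 ≤ a → 0 ≤ b → a + b = 1 →
    ∃ l : Λ, g l (a • z₁ + b • z₂) ≤ (a : EReal) * g l₁ z₁ + (b : EReal) * g l₂ z₂

/-! A real-valued function that is convex and lower semicontinuous in each variable, dominates
the pairing and vanishes on the axes is a bipotential: testing either subgradient inequality at
the origin forces `b x y ≤ p x y`, and conversely equality with the pairing turns the subgradient
inequality into `p z y ≤ b z y`. For `b x y = ‖x‖ * ‖y‖` this is Cauchy–Schwarz, whose equality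
case is exactly that `x` and `y` lie on the same ray. -/

theorem ConvexOn.econvexOn_coe {V : Type*} [AddCommGroup V] [Module ℝ V] {f : V → ℝ}
    (hf : ConvexOn ℝ Set.univ f) : EConvexOn fun v => (f v : EReal) := by
  intro u v a b ha hb hab
  rw [← EReal.coe_mul, ← EReal.coe_mul, ← EReal.coe_add, EReal.coe_le_coe_iff]
  exact hf.2 (Set.mem_univ u) (Set.mem_univ v) ha hb hab

theorem LowerSemicontinuous.coe_ereal {α : Type*} [TopologicalSpace α] {f : α → ℝ}
    (hf : LowerSemicontinuous f) : LowerSemicontinuous fun a => (f a : EReal) :=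
  continuous_coe_real_ereal.comp_lowerSemicontinuous hf EReal.coe_strictMono.monotone

section RealValued

variable {X Y : Type*} [AddCommGroup X] [Module ℝ X] [AddCommGroup Y] [Module ℝ Y]
  (p : X →ₗ[ℝ] Y →ₗ[ℝ] ℝ)

theorem mem_subdiffX_coe_iff {φ : X → ℝ} {y : Y} (h0 : φ 0 ≤ 0) (hle : ∀ z, p z y ≤ φ z)
    (x : X) : y ∈ SubdiffX p (fun z => (φ z : EReal)) x ↔ φ x = p x y := by
  simp only [SubdiffX, Set.mem_ofPred_eq, ← EReal.coe_add, EReal.coe_le_coe_iff, map_sub,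
    LinearMap.sub_apply]
  refine ⟨fun h => le_antisymm ?_ (hle x), fun h z => ?_⟩
  · linarith [h 0, LinearMap.map_zero₂ p y]
  · linarith [hle z]

theorem mem_subdiffY_coe_iff {ψ : Y → ℝ} {x : X} (h0 : ψ 0 ≤ 0) (hle : ∀ w, p x w ≤ ψ w)
    (y : Y) : x ∈ SubdiffY p (fun w => (ψ w : EReal)) y ↔ ψ y = p x y := by
  simp only [SubdiffY, Set.mem_ofPred_eq, ← EReal.coe_add, EReal.coe_le_coe_iff, map_sub]
  refine ⟨fun h => le_antisymm ?_ (hle y), fun h w => ?_⟩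
  · linarith [h 0, map_zero (p x)]
  · linarith [hle w]

theorem isBipotential_of_real [TopologicalSpace X] [TopologicalSpace Y] {b : X → Y → ℝ}
    (hconvX : ∀ y, ConvexOn ℝ Set.univ fun x => b x y)
    (hconvY : ∀ x, ConvexOn ℝ Set.univ fun y => b x y)
    (hlscX : ∀ y, LowerSemicontinuous fun x => b x y)
    (hlscY : ∀ x, LowerSemicontinuous fun y => b x y)
    (hle : ∀ x y, p x y ≤ b x y) (hzeroX : ∀ y, b 0 y ≤ 0) (hzeroY : ∀ x, b x 0 ≤ 0) :
    IsBipotential p fun x y => (b x y : EReal) := by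
  refine ⟨fun y => ⟨(hconvX y).econvexOn_coe, (hlscX y).coe_ereal⟩,
    fun x => ⟨(hconvY x).econvexOn_coe, (hlscY x).coe_ereal⟩,
    fun x y => EReal.coe_le_coe_iff.2 (hle x y), fun x y => ?_⟩
  rw [mem_subdiffX_coe_iff p (hzeroX y) (hle · y), mem_subdiffY_coe_iff p (hzeroY x) (hle x),
    EReal.coe_eq_coe_iff]
  exact ⟨Iff.rfl, Iff.rfl⟩

end RealValued

theorem norm_mul_norm_eq_inner_iff {H : Type*} [NormedAddCommGroup H] [InnerProductSpace ℝ H]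
    (x y : H) : ‖x‖ * ‖y‖ = ⟪x, y⟫_ℝ ↔ x = 0 ∨ y = 0 ∨ ∃ l : ℝ, 0 < l ∧ y = l • x := by
  rw [eq_comm, inner_eq_norm_mul_iff_real, eq_comm, ← sameRay_iff_norm_smul_eq]
  rcases eq_or_ne x 0 with rfl | hx
  · simp
  rcases eq_or_ne y 0 with rfl | hy
  · simp
  simp only [hx, hy, false_or, ← exists_pos_left_iff_sameRay hx hy, eq_comm]

theorem cauchy_isBipotential_general (H : Type*) [NormedAddCommGroup H]
    [InnerProductSpace ℝ H] :
    IsBipotential (innerₗ H)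
      (fun x y => ((‖x‖ * ‖y‖ : ℝ) : EReal)) ∧
    (∀ y : H, Continuous fun x : H => ‖x‖ * ‖y‖) ∧
    (∀ x : H, Continuous fun y : H => ‖x‖ * ‖y‖) ∧
    (∀ x y : H, ‖x‖ * ‖y‖ = ⟪x, y⟫_ℝ ↔
      x = 0 ∨ y = 0 ∨ ∃ l : ℝ, 0 < l ∧ y = l • x) := by
  have contX (y : H) : Continuous fun x : H => ‖x‖ * ‖y‖ := by fun_prop
  have contY (x : H) : Continuous fun y : H => ‖x‖ * ‖y‖ := by fun_prop
  have convX (y : H) : ConvexOn ℝ Set.univ fun x : H => ‖x‖ * ‖y‖ := by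
    simpa only [smul_eq_mul, mul_comm] using convexOn_univ_norm.smul (norm_nonneg y)
  have convY (x : H) : ConvexOn ℝ Set.univ fun y : H => ‖x‖ * ‖y‖ := by
    simpa only [smul_eq_mul] using convexOn_univ_norm.smul (norm_nonneg x)
  refine ⟨isBipotential_of_real (innerₗ H) convX convY (fun y => (contX y).lowerSemicontinuous)
    (fun x => (contY x).lowerSemicontinuous) (fun x y => by simpa using real_inner_le_norm x y)
    (by simp) (by simp), contX, contY, norm_mul_norm_eq_inner_iff⟩

/-- The Cauchy bipotential b(x,y) = ‖x‖‖y‖ on a real Hilbert space is a bipotential,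
is convex and continuous in each variable, and equality b(x,y) = ⟨x,y⟩ holds iff
x = 0, y = 0, or y = λx for some λ > 0. -/
theorem cauchy_isBipotential (H : Type*) [NormedAddCommGroup H]
    [InnerProductSpace ℝ H] [CompleteSpace H] :
    IsBipotential (innerₗ H)
      (fun x y => ((‖x‖ * ‖y‖ : ℝ) : EReal)) ∧
    (∀ y : H, Continuous fun x : H => ‖x‖ * ‖y‖) ∧
    (∀ x : H, Continuous fun y : H => ‖x‖ * ‖y‖) ∧
    (∀ x y : H, ‖x‖ * ‖y‖ = ⟪x, y⟫_ℝ ↔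
      x = 0 ∨ y = 0 ∨ ∃ l : ℝ, 0 < l ∧ y = l • x) :=
  cauchy_isBipotential_general H
end
end

section
/- Let (φ_λ)_{λ∈Λ} be a convex lagrangian cover of a BB-graph M and b(x,y) = inf_{λ∈Λ} (φ_λ(x) + φ_λ*(y)). If b(x,y) = ⟨x,y⟩ then (x,y) ∈ M, i.e. there exists λ ∈ Λ with φ_λ(x) + φ_λ*(y) = ⟨x,y⟩. Moreover the infimum defining b(x,y) is always attained at some λ̄ ∈ Λ. -/
open scoped InnerProductSpace

noncomputable section

variable {X Y : Type*} [AddCommGroup X] [Module ℝ X] [TopologicalSpace X]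
  [AddCommGroup Y] [Module ℝ Y] [TopologicalSpace Y]

/-! For fixed `(x, y)` the map `l ↦ φ_l(x) + φ_l*(y)` is a slice of a lower semicontinuous function
on `Λ × Y`, so it attains its infimum on the compact space `Λ` at some `l̄`. If that infimum is
`⟨x, y⟩`, then `(x, y) ∈ M(φ_l̄) ⊆ M`. -/

theorem LowerSemicontinuous.exists_iInf_eq {α β : Type*} [TopologicalSpace α] [CompactSpace α]
    [Nonempty α] [CompleteLinearOrder β] {f : α → β} (hf : LowerSemicontinuous f) :
    ∃ a, ⨅ a', f a' = f a := by
  obtain ⟨a, -, ha⟩ := (hf.lowerSemicontinuousOn Set.univ).exists_isMinOn Set.univ_nonempty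
    isCompact_univ
  exact ⟨a, le_antisymm (iInf_le f a) (le_iInf (isMinOn_univ_iff.mp ha))⟩

theorem cover_inf_eq_implies_mem_and_attained_general (p : X →ₗ[ℝ] Y →ₗ[ℝ] ℝ)
    {Λ : Type*} [TopologicalSpace Λ]
    (M : Set (X × Y)) (φ : Λ → X → EReal) (hcov : IsCover p M φ) :
    (∀ (x : X) (y : Y),
      (⨅ l : Λ, (φ l x + Conj p (φ l) y)) = ((p x y : ℝ) : EReal) → (x, y) ∈ M) ∧
    (∀ (x : X) (y : Y), ∃ lbar : Λ,
      (⨅ l : Λ, (φ l x + Conj p (φ l) y)) = φ lbar x + Conj p (φ lbar) y) := by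
  obtain ⟨_, _, -, hlsc, -, rfl⟩ := hcov
  have attained (x : X) (y : Y) : ∃ lbar : Λ,
      (⨅ l : Λ, (φ l x + Conj p (φ l) y)) = φ lbar x + Conj p (φ lbar) y :=
    ((hlsc x).comp (continuous_id.prodMk continuous_const)).exists_iInf_eq
  refine ⟨fun x y hxy => ?_, attained⟩
  obtain ⟨lbar, hlbar⟩ := attained x y
  exact Set.mem_iUnion.mpr ⟨lbar, hlbar.symm.trans hxy⟩

/-- If b(x,y) = ⟨x,y⟩ for the infimum b of a convex lagrangian cover then (x,y) ∈ M;
moreover the infimum is always attained. -/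
theorem cover_inf_eq_implies_mem_and_attained (p : X →ₗ[ℝ] Y →ₗ[ℝ] ℝ)
    {Λ : Type*} [TopologicalSpace Λ]
    (M : Set (X × Y)) (hM : IsBBGraph M) (φ : Λ → X → EReal) (hcov : IsCover p M φ) :
    (∀ (x : X) (y : Y),
      (⨅ l : Λ, (φ l x + Conj p (φ l) y)) = ((p x y : ℝ) : EReal) → (x, y) ∈ M) ∧
    (∀ (x : X) (y : Y), ∃ lbar : Λ,
      (⨅ l : Λ, (φ l x + Conj p (φ l) y)) = φ lbar x + Conj p (φ lbar) y) :=
  cover_inf_eq_implies_mem_and_attained_general p M φ hcov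
end
end

section
/- Let φ: ℝ → ℝ be differentiable with φ' strictly increasing, and let N = {(x, −φ'(x)) : x ∈ ℝ} be the graph of −φ'. Then for any convex lower semicontinuous ψ: ℝ → ℝ ∪ {+∞}, the set M(ψ) = {(x,y) : ψ(x) + ψ*(y) = xy} is not contained in N unless M(ψ) has at most one element. Consequently N admits no convex lagrangian cover. -/
open scoped InnerProductSpace

noncomputable section

variable {X Y : Type*} [AddCommGroup X] [Module ℝ X] [TopologicalSpace X]
  [AddCommGroup Y] [Module ℝ Y] [TopologicalSpace Y]

/-!
A point `(x, y)` lies in `M(ψ)` exactly when `ψ x` is finite and `y` is a subgradient of `ψ`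
at `x`, so `M(ψ)` is a monotone set, while no two distinct points of the graph of the strictly
antitone function `-φ'` are monotonically related. On the other hand, as soon as `M(ψ)` has a
point `(x₀, y₀)` it has a second one: `(x₀, y₀ + 1)` if `ψ = +∞` off `x₀`, and otherwise
`(m, s)` with `s` the right derivative of `ψ` at an interior point `m ≠ x₀` of its domain.
So a set `M(φ_λ)` of a cover that meets `N` would be a subsingleton with two points.
-/

theorem EReal.exists_coe_of_add_eq_coe {a b : EReal} {r : ℝ} (h : a + b = r) :
    ∃ A B : ℝ, a = A ∧ b = B ∧ A + B = r := by
  induction a using EReal.rec <;> induction b using EReal.rec <;> try simp at h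
  exact ⟨_, _, rfl, rfl, by exact_mod_cast h⟩

section Fenchel

variable {E F : Type*} [AddCommGroup E] [Module ℝ E] [AddCommGroup F] [Module ℝ F]
  {p : E →ₗ[ℝ] F →ₗ[ℝ] ℝ} {ψ : E → EReal} {x : E} {y : F}

theorem sub_le_Conj (p : E →ₗ[ℝ] F →ₗ[ℝ] ℝ) (ψ : E → EReal) (z : E) (y : F) :
    ((p z y : ℝ) : EReal) - ψ z ≤ Conj p ψ y :=
  le_iSup (fun z => ((p z y : ℝ) : EReal) - ψ z) z

theorem mem_SubdiffX_of_mem_Mphi (h : (x, y) ∈ Mphi p ψ) : y ∈ SubdiffX p ψ x := by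
  obtain ⟨A, B, hA, hB, hAB⟩ := EReal.exists_coe_of_add_eq_coe h
  intro z
  have hz := sub_le_Conj p ψ z y
  rw [hB] at hz
  rw [hA]
  generalize ψ z = t at hz ⊢
  induction t using EReal.rec with
  | bot => simp at hz
  | coe C =>
    rw [← EReal.coe_sub, EReal.coe_le_coe_iff] at hz
    rw [← EReal.coe_add, EReal.coe_le_coe_iff, map_sub, LinearMap.sub_apply]
    linarith
  | top => exact le_top

theorem mem_Mphi_of_mem_SubdiffX {A : ℝ} (hx : ψ x = A) (hy : y ∈ SubdiffX p ψ x) :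
    (x, y) ∈ Mphi p ψ := by
  have hConj : Conj p ψ y = ((p x y - A : ℝ) : EReal) := by
    refine le_antisymm (iSup_le fun z => ?_) ?_
    · have hz := hy z
      rw [hx] at hz
      generalize ψ z = t at hz ⊢
      induction t using EReal.rec with
      | bot =>
        rw [← EReal.coe_add, le_bot_iff] at hz
        exact absurd hz (EReal.coe_ne_bot _)
      | coe C =>
        rw [← EReal.coe_add, EReal.coe_le_coe_iff, map_sub, LinearMap.sub_apply] at hz
        rw [← EReal.coe_sub, EReal.coe_le_coe_iff]
        linarith
      | top => simp
    · simpa [hx, ← EReal.coe_sub] using sub_le_Conj p ψ x y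
  change ψ x + Conj p ψ y = _
  rw [hx, hConj, ← EReal.coe_add, add_sub_cancel]

/-- The equality case of the Fenchel–Young inequality. -/
theorem mem_Mphi_iff : (x, y) ∈ Mphi p ψ ↔ (∃ A : ℝ, ψ x = A) ∧ y ∈ SubdiffX p ψ x :=
  ⟨fun h => ⟨(EReal.exists_coe_of_add_eq_coe h).imp fun _ ⟨_, hA, _⟩ => hA,
      mem_SubdiffX_of_mem_Mphi h⟩,
    fun ⟨⟨_, hA⟩, hy⟩ => mem_Mphi_of_mem_SubdiffX hA hy⟩

theorem Mphi_monotone {q₁ q₂ : E × F} (h₁ : q₁ ∈ Mphi p ψ) (h₂ : q₂ ∈ Mphi p ψ) :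
    0 ≤ p (q₁.1 - q₂.1) (q₁.2 - q₂.2) := by
  obtain ⟨⟨A₁, hA₁⟩, hy₁⟩ := mem_Mphi_iff.1 h₁
  obtain ⟨⟨A₂, hA₂⟩, hy₂⟩ := mem_Mphi_iff.1 h₂
  have h₁₂ := hy₁ q₂.1
  have h₂₁ := hy₂ q₁.1
  rw [hA₁, hA₂, ← EReal.coe_add, EReal.coe_le_coe_iff] at h₁₂ h₂₁
  simp only [map_sub, LinearMap.sub_apply] at h₁₂ h₂₁ ⊢
  linarith

end Fenchel

theorem Set.Subsingleton.of_subset_graph_strictAnti {α : Type*} [Ring α] [LinearOrder α]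
    [IsStrictOrderedRing α] {f : α → α} (hf : StrictAnti f) {S : Set (α × α)}
    (hS : ∀ q₁ ∈ S, ∀ q₂ ∈ S, 0 ≤ (q₁.1 - q₂.1) * (q₁.2 - q₂.2))
    (hSf : S ⊆ {q | q.2 = f q.1}) : S.Subsingleton := by
  have hfst_not_lt : ∀ q₁ ∈ S, ∀ q₂ ∈ S, ¬ q₁.1 < q₂.1 := fun q₁ h₁ q₂ h₂ hlt => by
    have hneg : (q₁.1 - q₂.1) * (q₁.2 - q₂.2) < 0 := by
      rw [hSf h₁, hSf h₂]
      exact mul_neg_of_neg_of_pos (sub_neg.2 hlt) (sub_pos.2 (hf hlt))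
    exact (hS q₁ h₁ q₂ h₂).not_gt hneg
  rintro ⟨x₁, y₁⟩ h₁ ⟨x₂, y₂⟩ h₂
  obtain rfl : x₁ = x₂ :=
    le_antisymm (not_lt.1 (hfst_not_lt _ h₂ _ h₁)) (not_lt.1 (hfst_not_lt _ h₁ _ h₂))
  exact Prod.ext rfl ((hSf h₁).trans (hSf h₂).symm)

theorem EConvexOn.convexOn_toReal {V : Type*} [AddCommGroup V] [Module ℝ V] {ψ : V → EReal}
    (hψ : EConvexOn ψ) (hbot : ∀ z, ψ z ≠ ⊥) :
    ConvexOn ℝ {z | ψ z ≠ ⊤} fun z => (ψ z).toReal := by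
  have hcomb_le : ∀ {u v : V}, ψ u ≠ ⊤ → ψ v ≠ ⊤ → ∀ {a b : ℝ}, 0 ≤ a → 0 ≤ b → a + b = 1 →
      ψ (a • u + b • v) ≤ ((a * (ψ u).toReal + b * (ψ v).toReal : ℝ) : EReal) := by
    intro u v hu hv a b ha hb hab
    have h := hψ u v a b ha hb hab
    rwa [← EReal.coe_toReal hu (hbot u), ← EReal.coe_toReal hv (hbot v), ← EReal.coe_mul,
      ← EReal.coe_mul, ← EReal.coe_add] at h
  refine ⟨fun u hu v hv a b ha hb hab => ?_, fun u hu v hv a b ha hb hab => ?_⟩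
  · exact ne_top_of_le_ne_top (EReal.coe_ne_top _) (hcomb_le hu hv ha hb hab)
  · have h := EReal.toReal_le_toReal (hcomb_le hu hv ha hb hab) (hbot _) (EReal.coe_ne_top _)
    rwa [EReal.toReal_coe] at h

theorem ConvexOn.add_rightDeriv_mul_le {S : Set ℝ} {f : ℝ → ℝ} {x y : ℝ} (hf : ConvexOn ℝ S f)
    (hx : x ∈ interior S) (hy : y ∈ S) :
    f x + derivWithin f (Set.Ioi x) x * (y - x) ≤ f y := by
  rcases lt_trichotomy y x with hyx | rfl | hxy
  · have hleft := (hf.slope_le_leftDeriv_of_mem_interior hy hx hyx).trans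
      (hf.leftDeriv_le_rightDeriv_of_mem_interior hx)
    rw [slope_def_field, div_le_iff₀ (sub_pos.2 hyx)] at hleft
    linarith
  · simp
  · have hright := hf.rightDeriv_le_slope_of_mem_interior hx hy hxy
    rw [slope_def_field, le_div_iff₀ (sub_pos.2 hxy)] at hright
    linarith

theorem EConvexOn.exists_mem_Mphi_of_mem_interior {ψ : ℝ → EReal} (hψ : EConvexOn ψ)
    (hbot : ∀ z, ψ z ≠ ⊥) {m : ℝ} (hm : m ∈ interior {z | ψ z ≠ ⊤}) :
    ∃ s, (m, s) ∈ Mphi (LinearMap.mul ℝ ℝ) ψ := by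
  have hψm := (EReal.coe_toReal (interior_subset hm) (hbot m)).symm
  refine ⟨derivWithin (fun z => (ψ z).toReal) (Set.Ioi m) m,
    mem_Mphi_of_mem_SubdiffX hψm fun z => ?_⟩
  by_cases hz : ψ z = ⊤
  · simp [hz]
  · rw [← EReal.coe_toReal hz (hbot z), hψm, ← EReal.coe_add, EReal.coe_le_coe_iff,
      LinearMap.mul_apply', mul_comm]
    linarith [(hψ.convexOn_toReal hbot).add_rightDeriv_mul_le hm hz]

theorem EConvexOn.Mphi_nontrivial {ψ : ℝ → EReal} (hψ : EConvexOn ψ)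
    (hne : (Mphi (LinearMap.mul ℝ ℝ) ψ).Nonempty) : (Mphi (LinearMap.mul ℝ ℝ) ψ).Nontrivial := by
  obtain ⟨⟨x₀, y₀⟩, h₀⟩ := hne
  obtain ⟨⟨A₀, hA₀⟩, hy₀⟩ := mem_Mphi_iff.1 h₀
  have hbot : ∀ z, ψ z ≠ ⊥ := fun z hz => by
    have h := hy₀ z
    rw [hA₀, hz, ← EReal.coe_add, le_bot_iff] at h
    exact EReal.coe_ne_bot _ h
  by_cases hdom : ∃ x₁, x₁ ≠ x₀ ∧ ψ x₁ ≠ ⊤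
  · obtain ⟨u, w, huw, hu, hw, hx₀⟩ :
        ∃ u w, u < w ∧ ψ u ≠ ⊤ ∧ ψ w ≠ ⊤ ∧ (x₀ = u ∨ x₀ = w) := by
      obtain ⟨x₁, hx₁, hψx₁⟩ := hdom
      have hψx₀ : ψ x₀ ≠ ⊤ := by simp [hA₀]
      rcases hx₁.lt_or_gt with h | h
      exacts [⟨x₁, x₀, h, hψx₁, hψx₀, .inr rfl⟩, ⟨x₀, x₁, h, hψx₀, hψx₁, .inl rfl⟩]
    have hIoo : Set.Ioo u w ⊆ interior {z | ψ z ≠ ⊤} :=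
      isOpen_Ioo.subset_interior_iff.2 <| Set.Ioo_subset_Icc_self.trans <|
        (convex_iff_ordConnected.1 (hψ.convexOn_toReal hbot).1).out hu hw
    obtain ⟨s, hs⟩ := hψ.exists_mem_Mphi_of_mem_interior hbot
      (hIoo ⟨by linarith, by linarith⟩ : (u + w) / 2 ∈ _)
    refine ⟨_, h₀, _, hs, fun h => ?_⟩
    have : x₀ = (u + w) / 2 := congrArg Prod.fst h
    rcases hx₀ with rfl | rfl <;> linarith
  · push Not at hdom
    refine ⟨_, h₀, (x₀, y₀ + 1), mem_Mphi_of_mem_SubdiffX hA₀ fun z => ?_, by simp⟩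
    rcases eq_or_ne z x₀ with rfl | hz
    · simp
    · simp [hdom z hz]

theorem graph_neg_deriv_no_cover_general (φ : ℝ → ℝ)
    (hmono : StrictMono (deriv φ)) :
    (∀ ψ : ℝ → EReal, EConvexOn ψ → LowerSemicontinuous ψ →
      Mphi (LinearMap.mul ℝ ℝ) ψ ⊆ {q : ℝ × ℝ | q.2 = -(deriv φ q.1)} →
      (Mphi (LinearMap.mul ℝ ℝ) ψ).Subsingleton) ∧
    ¬ ∃ (Λ : Type) (instΛ : TopologicalSpace Λ) (φfam : Λ → ℝ → EReal),
        @IsCover ℝ ℝ _ _ _ _ _ _ (LinearMap.mul ℝ ℝ) Λ instΛ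
          {q : ℝ × ℝ | q.2 = -(deriv φ q.1)} φfam := by
  have hsubsingleton : ∀ ψ : ℝ → EReal,
      Mphi (LinearMap.mul ℝ ℝ) ψ ⊆ {q : ℝ × ℝ | q.2 = -(deriv φ q.1)} →
      (Mphi (LinearMap.mul ℝ ℝ) ψ).Subsingleton := fun ψ hN =>
    .of_subset_graph_strictAnti hmono.neg (fun _ h₁ _ h₂ => Mphi_monotone h₁ h₂) hN
  refine ⟨fun ψ _ _ => hsubsingleton ψ, ?_⟩
  rintro ⟨Λ, _, φfam, -, -, hconv, -, -, hcover⟩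
  obtain ⟨l, hl⟩ := Set.mem_iUnion.1
    (hcover ▸ rfl : ((0 : ℝ), -deriv φ 0) ∈ ⋃ l, Mphi (LinearMap.mul ℝ ℝ) (φfam l))
  have hlN := hcover ▸ Set.subset_iUnion (fun l => Mphi (LinearMap.mul ℝ ℝ) (φfam l)) l
  exact ((hconv l).1.Mphi_nontrivial ⟨_, hl⟩).not_subsingleton (hsubsingleton _ hlN)

/-- The graph of -φ' for φ' strictly increasing contains no M(ψ) with more than one point,
hence admits no convex lagrangian cover. -/
theorem graph_neg_deriv_no_cover (φ : ℝ → ℝ) (hd : Differentiable ℝ φ)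
    (hmono : StrictMono (deriv φ)) :
    (∀ ψ : ℝ → EReal, EConvexOn ψ → LowerSemicontinuous ψ →
      Mphi (LinearMap.mul ℝ ℝ) ψ ⊆ {q : ℝ × ℝ | q.2 = -(deriv φ q.1)} →
      (Mphi (LinearMap.mul ℝ ℝ) ψ).Subsingleton) ∧
    ¬ ∃ (Λ : Type) (instΛ : TopologicalSpace Λ) (φfam : Λ → ℝ → EReal),
        @IsCover ℝ ℝ _ _ _ _ _ _ (LinearMap.mul ℝ ℝ) Λ instΛ
          {q : ℝ × ℝ | q.2 = -(deriv φ q.1)} φfam :=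
  graph_neg_deriv_no_cover_general φ hmono
end
end
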